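/- Let f : ℝⁿ → ℝ be convex with minimizer x_* and sharp growth f(x) ≥ f(x_*) + α‖x − x_*‖ for all x, with α > 0, and let ρ > 0. If x⁺ = prox_{ρ,f}(x) and x⁺ ≠ x_*, then f(x⁺) ≤ f(x) − ‖x⁺ − x‖²/ρ and ‖x⁺ − x‖ ≥ ρα; hence f(x⁺) ≤ f(x) − ρα². -/

import Mathlib

/-!
By convexity, the first-order optimality condition of the prox subproblem says that
`(x - y) / ρ` is a subgradient of `f` at `y = prox_{ρ,f}(x)`. Testing the subgradient inequality
at `z = x` gives the decrease `‖y - x‖² / ρ`. Testing it at `z = xs` and combining with sharp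
growth gives `α ‖y - xs‖ ≤ ⟪(x - y) / ρ, y - xs⟫ ≤ ‖x - y‖ ‖y - xs‖ / ρ`, so every subgradient
away from the minimizer has norm at least `α`, i.e. `‖y - x‖ ≥ ρ α`.
-/

open scoped RealInnerProductSpace
open Filter Topology Set

noncomputable section

/-- `y` is the prox point `prox_{ρ,f}(x)`, i.e. it minimizes `z ↦ f z + (1/(2ρ))‖z - x‖²`. -/
def IsProx {n : ℕ} (ρ : ℝ) (f : EuclideanSpace ℝ (Fin n) → ℝ)
    (x y : EuclideanSpace ℝ (Fin n)) : Prop :=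
  ∀ z, f y + (1 / (2 * ρ)) * ‖y - x‖ ^ 2 ≤ f z + (1 / (2 * ρ)) * ‖z - x‖ ^ 2

variable {E : Type*} [NormedAddCommGroup E] [InnerProductSpace ℝ E]

def IsSubgradient (f : E → ℝ) (g y : E) : Prop :=
  ∀ z, f y + ⟪g, z - y⟫ ≤ f z

lemma IsSubgradient.le_norm_of_sharp {f : E → ℝ} {g y xs : E} {α : ℝ}
    (hg : IsSubgradient f g y) (hsharp : ∀ z, f xs + α * ‖z - xs‖ ≤ f z) (hne : y ≠ xs) :
    α ≤ ‖g‖ := by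
  have hpos : 0 < ‖y - xs‖ := norm_pos_iff.mpr (sub_ne_zero.mpr hne)
  have hflip : ⟪g, xs - y⟫ = -⟪g, y - xs⟫ := by rw [← inner_neg_right, neg_sub]
  have hsub := hg xs
  have hgrowth := hsharp y
  have hcs := real_inner_le_norm g (y - xs)
  rw [hflip] at hsub
  exact le_of_mul_le_mul_right (by linarith) hpos

section Prox

variable {f : E → ℝ} {ρ : ℝ} {x y : E}

lemma ConvexOn.prox_inner_le_add (hconv : ConvexOn ℝ univ f)
    (hprox : ∀ z, f y + 1 / (2 * ρ) * ‖y - x‖ ^ 2 ≤ f z + 1 / (2 * ρ) * ‖z - x‖ ^ 2)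
    (z : E) {t : ℝ} (ht : 0 < t) (ht1 : t ≤ 1) :
    f y + ⟪ρ⁻¹ • (x - y), z - y⟫ ≤ f z + t * (‖z - y‖ ^ 2 / (2 * ρ)) := by
  have hmid : (1 - t) • y + t • z - x = (y - x) + t • (z - y) := by module
  have hnorm : ‖(1 - t) • y + t • z - x‖ ^ 2
      = ‖y - x‖ ^ 2 - 2 * t * ⟪x - y, z - y⟫ + t ^ 2 * ‖z - y‖ ^ 2 := by
    rw [hmid, norm_add_sq_real, real_inner_smul_right, norm_smul, Real.norm_of_nonneg ht.le,
      ← neg_sub x y, inner_neg_left]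
    ring
  have hmin := hprox ((1 - t) • y + t • z)
  have hconvex : f ((1 - t) • y + t • z) ≤ (1 - t) * f y + t * f z :=
    hconv.2 (mem_univ y) (mem_univ z) (by linarith) ht.le (by ring)
  have hexpand : 1 / (2 * ρ) * (‖y - x‖ ^ 2 - 2 * t * ⟪x - y, z - y⟫ + t ^ 2 * ‖z - y‖ ^ 2)
      = 1 / (2 * ρ) * ‖y - x‖ ^ 2 - t * (ρ⁻¹ * ⟪x - y, z - y⟫)
        + t * (t * (‖z - y‖ ^ 2 / (2 * ρ))) := by
    ring
  rw [hnorm, hexpand] at hmin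
  rw [real_inner_smul_left]
  exact le_of_mul_le_mul_left (by linarith) ht

lemma ConvexOn.isSubgradient_of_prox (hconv : ConvexOn ℝ univ f)
    (hprox : ∀ z, f y + 1 / (2 * ρ) * ‖y - x‖ ^ 2 ≤ f z + 1 / (2 * ρ) * ‖z - x‖ ^ 2) :
    IsSubgradient f (ρ⁻¹ • (x - y)) y := by
  intro z
  have hlim : Tendsto (fun t : ℝ ↦ f z + t * (‖z - y‖ ^ 2 / (2 * ρ))) (𝓝[>] 0) (𝓝 (f z)) := by
    refine tendsto_nhdsWithin_of_tendsto_nhds ?_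
    exact (by fun_prop : Continuous fun t : ℝ ↦ f z + t * (‖z - y‖ ^ 2 / (2 * ρ))).tendsto' 0 _
      (by simp)
  refine ge_of_tendsto hlim ?_
  filter_upwards [Ioc_mem_nhdsGT zero_lt_one] with t ht
  exact hconv.prox_inner_le_add hprox z ht.1 ht.2

end Prox

theorem prox_step_decrease_general {n : ℕ} (f : EuclideanSpace ℝ (Fin n) → ℝ) (ρ α : ℝ)
    (xs x y : EuclideanSpace ℝ (Fin n))
    (hconv : ConvexOn ℝ Set.univ f)
    (hα : 0 < α)
    (hsharp : ∀ z, f xs + α * ‖z - xs‖ ≤ f z)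
    (hρ : 0 < ρ)
    (hprox : IsProx ρ f x y)
    (hne : y ≠ xs) :
    f y ≤ f x - ‖y - x‖ ^ 2 / ρ ∧ ρ * α ≤ ‖y - x‖ ∧ f y ≤ f x - ρ * α ^ 2 := by
  have hg := hconv.isSubgradient_of_prox hprox
  have hdecrease : f y ≤ f x - ‖y - x‖ ^ 2 / ρ := by
    have := hg x
    rw [real_inner_smul_left, real_inner_self_eq_norm_sq, norm_sub_rev] at this
    linarith [div_eq_inv_mul (‖y - x‖ ^ 2) ρ]
  have hstep : ρ * α ≤ ‖y - x‖ := by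
    have := hg.le_norm_of_sharp hsharp hne
    rw [norm_smul, norm_inv, Real.norm_of_nonneg hρ.le, norm_sub_rev, inv_mul_eq_div,
      le_div_iff₀ hρ] at this
    linarith
  have hsq : ρ * α ^ 2 ≤ ‖y - x‖ ^ 2 / ρ :=
    calc ρ * α ^ 2 = (ρ * α) ^ 2 / ρ := by field_simp
      _ ≤ ‖y - x‖ ^ 2 / ρ := by gcongr
  exact ⟨hdecrease, hstep, by linarith⟩

/-- under sharp growth, a prox step not landing on the minimizer decreases the
objective by at least ρα². -/
theorem prox_step_decrease {n : ℕ} (f : EuclideanSpace ℝ (Fin n) → ℝ) (ρ α : ℝ)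
    (xs x y : EuclideanSpace ℝ (Fin n))
    (hconv : ConvexOn ℝ Set.univ f)
    (hmin : ∀ z, f xs ≤ f z)
    (hα : 0 < α)
    (hsharp : ∀ z, f xs + α * ‖z - xs‖ ≤ f z)
    (hρ : 0 < ρ)
    (hprox : IsProx ρ f x y)
    (hne : y ≠ xs) :
    f y ≤ f x - ‖y - x‖ ^ 2 / ρ ∧ ρ * α ≤ ‖y - x‖ ∧ f y ≤ f x - ρ * α ^ 2 :=
  prox_step_decrease_general f ρ α xs x y hconv hα hsharp hρ hprox hne
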